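/- arXiv:2203.15960 — 2 statements merged into one kernel-verified Lean document; each statement's English description precedes it below -/
import Mathlib

section
/- Let h̃ be a semi-monotone degree-one lift descending to h : S¹ → S¹, suppose h has exactly ℓ flat spots J₁,…,J_ℓ, and on P(h) = S¹ minus the interiors of the flat spots h is C¹ with one-sided derivatives > 1. Assume ρ(h̃) = α is irrational and let Z be the unique minimal set of h. Call a flat spot J_i tight if both endpoints of J_i lie in Z, and loose otherwise. Then J_i is loose if and only if there exist n > 0 and an index i' with hⁿ(J_i) ⊆ J_{i'} (note hⁿ(J_i) is a single point for n ≥ 1). In particular, at least one flat spot is tight. -/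
open Set Filter Topology MeasureTheory Function
open scoped ENNReal Classical

noncomputable section

/-- The circle ℝ/ℤ. -/
abbrev Circle1 : Type := AddCircle (1 : ℝ)

/-- The k-fold cover ℝ/kℤ. -/
abbrev CircleK (k : ℕ) : Type := AddCircle ((k : ℝ))

/-- Projection ℝ → ℝ/ℤ. -/
def mk1 : ℝ → Circle1 := fun x => (x : Circle1)

/-- Projection ℝ → ℝ/kℤ. -/
def mkk (k : ℕ) : ℝ → CircleK k := fun x => (x : CircleK k)

/-- Covering projection S_k → S¹ induced by the identity on ℝ. -/
def piK (k : ℕ) : CircleK k → Circle1 :=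
  QuotientAddGroup.map (AddSubgroup.zmultiples ((k : ℕ) : ℝ)) (AddSubgroup.zmultiples (1 : ℝ))
    (AddMonoidHom.id ℝ)
    (by
      intro x hx
      obtain ⟨n, rfl⟩ := AddSubgroup.mem_zmultiples_iff.mp hx
      simp only [AddSubgroup.mem_comap, AddMonoidHom.id_apply]
      exact AddSubgroup.mem_zmultiples_iff.mpr
        ⟨n * (k : ℤ), by push_cast [zsmul_eq_mul]; ring⟩)

/-- Deck transformation of S_k, induced by x ↦ x + 1. -/
def TK (k : ℕ) : CircleK k → CircleK k := fun x => x + mkk k 1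

/-- Forward orbit of a point. -/
def fwdOrbit {X : Type*} (f : X → X) (x : X) : Set X := Set.range fun n : ℕ => f^[n] x

/-- A nonempty compact invariant set on which every forward orbit is dense. -/
def IsMinimalSet {X : Type*} [TopologicalSpace X] (f : X → X) (Z : Set X) : Prop :=
  Z.Nonempty ∧ IsCompact Z ∧ Set.MapsTo f Z Z ∧ ∀ z ∈ Z, Z ⊆ closure (fwdOrbit f z)

/-- x = lim f^[n i] x along some sequence n i → ∞. -/
def IsRecurrentPt {X : Type*} [TopologicalSpace X] (f : X → X) (x : X) : Prop :=
  ∃ n : ℕ → ℕ, Tendsto n atTop atTop ∧ Tendsto (fun i => f^[n i] x) atTop (𝓝 x)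

/-- The point x has rotation number ρ for the lift gt. -/
def HasPtRotNum (gt : ℝ → ℝ) (x ρ : ℝ) : Prop :=
  Tendsto (fun n : ℕ => (gt^[n] x - x) / n) atTop (𝓝 ρ)

/-- gt has rotation number ρ (the limit exists for all points and equals ρ). -/
def HasRotNum (gt : ℝ → ℝ) (ρ : ℝ) : Prop := ∀ x, HasPtRotNum gt x ρ

/-- The rotation set of a lift. -/
def rotSet (gt : ℝ → ℝ) : Set ℝ := {ρ | ∃ x, HasPtRotNum gt x ρ}

/-- Continuous nondecreasing degree-one lift. -/
def IsSemiMonotoneLift (ht : ℝ → ℝ) : Prop :=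
  Continuous ht ∧ Monotone ht ∧ ∀ x, ht (x + 1) = ht x + 1

/-- [a,b] is (a fundamental-domain representative of) a maximal nontrivial closed
arc on which the induced circle map is constant. -/
def IsFlatSpot (ht : ℝ → ℝ) (a b : ℝ) : Prop :=
  a < b ∧ b - a < 1 ∧ (∀ x ∈ Set.Icc a b, ht x = ht a) ∧
    ∀ a' b', a' ≤ a → b ≤ b' → (∀ x ∈ Set.Icc a' b', ht x = ht a) → a' = a ∧ b' = b

/-- The left shift on one-sided sequences. -/
def shiftSeq {α : Type*} : (ℕ → α) → ℕ → α := fun s n => s (n + 1)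

/-- Strict lexicographic order on one-sided sequences. -/
def lexLt {α : Type*} [LT α] (s t : ℕ → α) : Prop :=
  ∃ n, (∀ i, i < n → s i = t i) ∧ s n < t n

/-- Lexicographic order on one-sided sequences. -/
def lexLe {α : Type*} [LT α] (s t : ℕ → α) : Prop := s = t ∨ lexLt s t

/-- Reduction of every entry mod 2. -/
def pihat : (ℕ → ℕ) → ℕ → ℕ := fun s n => s n % 2

/-- The sequence s has symbolic rotation number ω: the averages of the mod-2
reductions of its entries converge to ω. -/
def symbRot (s : ℕ → ℕ) (ω : ℝ) : Prop :=
  Tendsto (fun n : ℕ => (∑ i ∈ Finset.range (n + 1), ((s i % 2 : ℕ) : ℝ)) / (n + 1))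
    atTop (𝓝 ω)

/-- Allowed transitions for Ω_k (entries mod 2k). -/
def transK (k : ℕ) (a c : ℕ) : Prop :=
  (Even a ∧ (c = a ∨ c = a + 1)) ∨ (Odd a ∧ (c = (a + 1) % (2 * k) ∨ c = (a + 2) % (2 * k)))

/-- The subshift Ω_k ⊆ Σ⁺_{2k}. -/
def OmegaK (k : ℕ) : Set (ℕ → ℕ) :=
  {s | (∀ n, s n < 2 * k) ∧ ∀ n, transK k (s n) (s (n + 1))}

/-- Allowed transitions for Ω_∞. -/
def transZ (a c : ℤ) : Prop :=
  (Even a ∧ (c = a ∨ c = a + 1)) ∨ (Odd a ∧ (c = a + 1 ∨ c = a + 2))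

/-- The subshift Ω_∞ ⊆ ℤ^ℕ. -/
def OmegaInf : Set (ℕ → ℤ) := {s | ∀ n, transZ (s n) (s (n + 1))}

/-- p̂_k : Ω_∞ → Ω_k, reduction of all entries mod 2k. -/
def projK (k : ℕ) : (ℕ → ℤ) → ℕ → ℕ := fun s n => (s n % (2 * k : ℤ)).toNat

/-- A symbolic k-fold semi-monotone subset of Ω_k. -/
def SymbolicKfsm (k : ℕ) (Z : Set (ℕ → ℕ)) : Prop :=
  Z ⊆ OmegaK k ∧ Set.MapsTo shiftSeq Z Z ∧
    ∃ Z' : Set (ℕ → ℤ), Z' ⊆ OmegaInf ∧ Set.MapsTo shiftSeq Z' Z' ∧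
      (fun s : ℕ → ℤ => fun n => s n + 2 * k) '' Z' = Z' ∧
      (∀ s ∈ Z', ∀ t ∈ Z', lexLe s t → lexLe (shiftSeq s) (shiftSeq t)) ∧
      projK k '' Z' = Z

/-- The dynamical order interval ⟨a, b⟩. -/
def dynInterval (a b : ℕ → ℕ) : Set (ℕ → ℕ) :=
  {s | ∀ n, lexLe a (shiftSeq^[n] s) ∧ lexLe (shiftSeq^[n] s) b}

/-- The unique shift-invariant probability measure on the orbit of a periodic
point of period N: the uniform average of point masses along the orbit. -/
noncomputable def orbitMeasure (s : ℕ → ℕ) (N : ℕ) : Measure (ℕ → ℕ) :=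
  (N : ℝ≥0∞)⁻¹ • ∑ i ∈ Finset.range N, Measure.dirac (shiftSeq^[i] s)

/-! ### The Hedlund–Morse construction -/

/-- Partial sums ν₁ + ⋯ + ν_j. -/
def psum {k : ℕ} (ν : Fin k → ℝ) (j : ℕ) : ℝ := ∑ i : Fin k, if (i : ℕ) < j then ν i else 0

/-- An allowable HM parameter pair. -/
def HMAllowable {k : ℕ} (ω : ℝ) (ν : Fin k → ℝ) : Prop :=
  0 < ω ∧ ω < 1 ∧ (∀ i, 0 ≤ ν i) ∧ ∑ i, ν i = k * (1 - ω)

/-- Left endpoint of the HM address interval X_m. -/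
def hmL {k : ℕ} (ω : ℝ) (ν : Fin k → ℝ) (m : ℕ) : ℝ :=
  if Even m then psum ν (m / 2) + ((m / 2 : ℕ) : ℝ) * ω
  else psum ν (m / 2 + 1) + ((m / 2 : ℕ) : ℝ) * ω

/-- Right endpoint of the HM address interval X_m. -/
def hmR {k : ℕ} (ω : ℝ) (ν : Fin k → ℝ) (m : ℕ) : ℝ :=
  if Even m then psum ν (m / 2 + 1) + ((m / 2 : ℕ) : ℝ) * ω
  else psum ν (m / 2 + 1) + ((m / 2 + 1 : ℕ) : ℝ) * ω

/-- The HM address interval X_m ⊆ ℝ (a fundamental-domain representative). -/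
def hmX {k : ℕ} (ω : ℝ) (ν : Fin k → ℝ) (m : ℕ) : Set ℝ := Set.Icc (hmL ω ν m) (hmR ω ν m)

/-- Rigid rotation by ω on S_k. -/
def RotK (k : ℕ) (ω : ℝ) : CircleK k → CircleK k := fun x => x + mkk k ω

/-- The good set: points whose forward rotation orbit avoids all endpoints of the
address intervals. -/
def hmGood (k : ℕ) (ω : ℝ) (ν : Fin k → ℝ) : Set (CircleK k) :=
  {x | ∀ n : ℕ, ∀ m, m < 2 * k →
    (RotK k ω)^[n] x ≠ mkk k (hmL ω ν m) ∧ (RotK k ω)^[n] x ≠ mkk k (hmR ω ν m)}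

/-- The address of a point of S_k (the index m with x ∈ X_m; junk value 0 if none). -/
noncomputable def hmAddr (k : ℕ) (ω : ℝ) (ν : Fin k → ℝ) (x : CircleK k) : ℕ :=
  if h : ∃ m, m < 2 * k ∧ x ∈ mkk k '' hmX ω ν m then h.choose else 0

/-- The HM itinerary of a point of S_k. -/
noncomputable def hmZeta (k : ℕ) (ω : ℝ) (ν : Fin k → ℝ) (x : CircleK k) : ℕ → ℕ :=
  fun n => hmAddr k ω ν ((RotK k ω)^[n] x)

/-- B_k(ω,ν): the closure of the set of itineraries of good points. -/
noncomputable def hmB (k : ℕ) (ω : ℝ) (ν : Fin k → ℝ) : Set (ℕ → ℕ) :=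
  closure (hmZeta k ω ν '' hmGood k ω ν)

/-- λ_k(ω,ν) = ζ_*(Leb)/k, where Leb is Lebesgue measure on S_k = [0,k). -/
noncomputable def hmLambda (k : ℕ) (ω : ℝ) (ν : Fin k → ℝ) : Measure (ℕ → ℕ) :=
  (k : ℝ≥0∞)⁻¹ •
    ((((volume.restrict (Set.Ico (0 : ℝ) (k : ℝ))).map (mkk k)).restrict
        (hmGood k ω ν)).map (hmZeta k ω ν))

/-- The left cyclic shift τ on ℝ^k. -/
def cyc {k : ℕ} (ν : Fin k → ℝ) : Fin k → ℝ :=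
  fun i => ν ⟨(i.val + 1) % k, Nat.mod_lt _ (Nat.lt_of_le_of_lt (Nat.zero_le _) i.isLt)⟩

/-- The Sturmian minimal set with rotation number ω. -/
noncomputable def sturmianSet (ω : ℝ) : Set (ℕ → ℕ) :=
  if ω = 0 then {fun _ => 0}
  else if ω = 1 then {fun _ => 1}
  else hmB 1 ω fun _ => 1 - ω

/-! ### The class 𝒢 of bimodal degree-one circle maps -/

/-- Piecewise C² on [0,1]. -/
def PiecewiseC2 (f : ℝ → ℝ) : Prop :=
  ∃ (n : ℕ) (x : ℕ → ℝ), x 0 = 0 ∧ x n = 1 ∧ (∀ i, i < n → x i ≤ x (i + 1)) ∧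
    ∀ i, i < n → ContDiffOn ℝ 2 f (Set.Ioo (x i) (x (i + 1)))

/-- g : S¹ → S¹ belongs to the class 𝒢, with lift gt and turning point xmax. -/
structure GMap (g : Circle1 → Circle1) (gt : ℝ → ℝ) (xmax : ℝ) : Prop where
  cont : Continuous gt
  pw : PiecewiseC2 gt
  deg : ∀ x, gt (x + 1) = gt x + 1
  lift : ∀ x, g (mk1 x) = mk1 (gt x)
  xmax_pos : 0 < xmax
  xmax_lt_one : xmax < 1
  expand : ∀ x ∈ Set.Ioo (0 : ℝ) xmax, ∃ d, 1 < d ∧ HasDerivAt gt d x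
  dec : ∀ x ∈ Set.Icc xmax 1, ∀ y ∈ Set.Icc xmax 1, x < y → gt y < gt x
  low : 0 ≤ gt 0
  mid : gt 0 < gt xmax
  high : gt xmax ≤ xmax + 1

/-- The address intervals I_m ⊆ ℝ: I_{2j} = [j, zmax+j], I_{2j+1} = [zmin+j, xmax+j]. -/
def addrI (zmax zmin xmax : ℝ) (m : ℤ) : Set ℝ :=
  if Even m then Set.Icc ((m / 2 : ℤ) : ℝ) (zmax + ((m / 2 : ℤ) : ℝ))
  else Set.Icc (zmin + (((m - 1) / 2 : ℤ) : ℝ)) (xmax + (((m - 1) / 2 : ℤ) : ℝ))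

/-- Λ_∞(g): points of ℝ whose forward gt-orbit stays in the address intervals. -/
def LambdaInf (gt : ℝ → ℝ) (zmax zmin xmax : ℝ) : Set ℝ :=
  {x | ∀ n : ℕ, ∃ m : ℤ, gt^[n] x ∈ addrI zmax zmin xmax m}

/-- Λ_k(g): points of S_k whose forward g_k-orbit stays in I_0 ∪ ⋯ ∪ I_{2k-1}. -/
def LambdaK (k : ℕ) (gk : CircleK k → CircleK k) (zmax zmin xmax : ℝ) : Set (CircleK k) :=
  {x | ∀ n : ℕ, ∃ m : ℕ, m < 2 * k ∧ gk^[n] x ∈ mkk k '' addrI zmax zmin xmax (m : ℤ)}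

/-- Λ₁(g): points of S¹ whose forward g-orbit stays in I₀ ∪ I₁. -/
def Lambda1 (g : Circle1 → Circle1) (zmax zmin xmax : ℝ) : Set Circle1 :=
  {x | ∀ n : ℕ, g^[n] x ∈ mk1 '' Set.Icc 0 zmax ∪ mk1 '' Set.Icc zmin xmax}

/-- A k-fold semi-monotone subset of S_k: it has a lift Z' ⊆ ℝ that is
gt-invariant, invariant under x ↦ x + k, and on which gt is weakly order
preserving. -/
def PhysKfsmK (gt : ℝ → ℝ) (k : ℕ) (Z : Set (CircleK k)) : Prop :=
  ∃ Z' : Set ℝ, (∀ x ∈ Z', gt x ∈ Z') ∧ (fun x => x + (k : ℝ)) '' Z' = Z' ∧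
    (∀ x ∈ Z', ∀ y ∈ Z', x < y → gt x ≤ gt y) ∧ mkk k '' Z' = Z

/-- A k-fold semi-monotone subset of S¹. -/
def PhysKfsm1 (gt : ℝ → ℝ) (k : ℕ) (Z : Set Circle1) : Prop :=
  ∃ Z' : Set ℝ, (∀ x ∈ Z', gt x ∈ Z') ∧ (fun x => x + (k : ℝ)) '' Z' = Z' ∧
    (∀ x ∈ Z', ∀ y ∈ Z', x < y → gt x ≤ gt y) ∧ mk1 '' Z' = Z


/-- The positive-slope region P(h) in ℝ: the complement of the interiors of all
the (translated) flat spots. -/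
def flatComplR {l : ℕ} (a b : Fin l → ℝ) : Set ℝ :=
  {x | ∀ (i : Fin l) (n : ℤ), x ∉ Set.Ioo (a i + n) (b i + n)}

/-- The positive-slope region P(h) in the circle: the complement of the interiors
of the flat spots. -/
def flatComplC {l : ℕ} (a b : Fin l → ℝ) : Set Circle1 :=
  (⋃ i, mk1 '' Set.Ioo (a i) (b i))ᶜ

end


/-!
On the line, the minimal set becomes a closed, `ℤ`-periodic, `ht`-invariant set `Z̃`. Since the
rotation number is irrational, `h` has no periodic points; hence `Z̃` has no isolated points and
misses the interior of every interval on which `ht` is constant.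

The ends of a tight flat spot are accumulated by `Z̃` from outside the spot. Next to such a point
`ht` is strictly increasing on `Z̃`, so the common image of the two ends is accumulated from both
sides, and is therefore never an end of a flat spot.

A loose flat spot lies in a strictly larger gap of `Z̃`. Images of gaps are gaps, pairwise disjoint
modulo `ℤ`; were they never to collapse, all but finitely many would avoid the flat spots and be
expanded by `ht`, although their total length is finite. The gap collapses on a flat spot, which
then contains the image of the loose one.

If all flat spots were loose, following images through the finitely many flat spots would give
one mapped into itself by an iterate of `h`, and its image would be a periodic point.
-/

section Order

variable {α : Type*} [LinearOrder α]

structure IsGap (S : Set α) (u v : α) : Prop where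
  left_mem : u ∈ S
  right_mem : v ∈ S
  disjoint : Disjoint (Ioo u v) S

theorem Monotone.apply_eq_of_mem_Icc {β : Type*} [PartialOrder β] {f : α → β} (hf : Monotone f)
    {p q x : α} (he : f p = f q) (hx : x ∈ Icc p q) : f x = f p :=
  le_antisymm (he ▸ hf hx.2) (hf hx.1)

theorem Monotone.iterate_eq_of_mem_Icc {f : α → α} (hf : Monotone f) {p q x : α} (he : f p = f q)
    (hx : x ∈ Icc p q) {n : ℕ} (hn : 0 < n) : f^[n] x = f^[n] p := by
  obtain ⟨m, rfl⟩ := Nat.exists_eq_add_one_of_ne_zero hn.ne'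
  rw [iterate_succ_apply, iterate_succ_apply, hf.apply_eq_of_mem_Icc he hx]

namespace IsGap

variable {S : Set α} {u v : α}

theorem image (hg : IsGap S u v) {f : α → α} (hf : Monotone f) (hmaps : MapsTo f S S)
    (hsurj : S ⊆ f '' S) : IsGap S (f u) (f v) := by
  refine ⟨hmaps hg.left_mem, hmaps hg.right_mem, Set.disjoint_right.2 fun y hy hyI => ?_⟩
  obtain ⟨x, hx, rfl⟩ := hsurj hy
  rcases le_or_gt x u with hxu | hux
  · exact (hf hxu).not_gt hyI.1
  rcases lt_or_ge x v with hxv | hvx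
  · exact Set.disjoint_right.1 hg.disjoint hx ⟨hux, hxv⟩
  · exact (hf hvx).not_gt hyI.2

theorem iterate (hg : IsGap S u v) {f : α → α} (hf : Monotone f) (hmaps : MapsTo f S S)
    (hsurj : S ⊆ f '' S) (n : ℕ) : IsGap S (f^[n] u) (f^[n] v) := by
  induction n with
  | zero => exact hg
  | succ n ih =>
    rw [iterate_succ_apply', iterate_succ_apply']
    exact ih.image hf hmaps hsurj

theorem left_eq {u' v' : α} (hg : IsGap S u v) (hg' : IsGap S u' v')
    (h : ¬Disjoint (Ioo u v) (Ioo u' v')) : u = u' := by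
  obtain ⟨x, hx, hx'⟩ := Set.not_disjoint_iff.1 h
  rcases lt_trichotomy u u' with hlt | heq | hgt
  · exact (Set.disjoint_left.1 hg.disjoint ⟨hlt, hx'.1.trans hx.2⟩ hg'.left_mem).elim
  · exact heq
  · exact (Set.disjoint_left.1 hg'.disjoint ⟨hgt, hx.1.trans hx'.2⟩ hg.left_mem).elim

theorem le_and_le_of_not_disjoint {A B : α} (hg : IsGap S u v) (hAB : Disjoint (Ioo A B) S)
    (h : ¬Disjoint (Ioo u v) (Ioo A B)) : u ≤ A ∧ B ≤ v := by
  obtain ⟨x, hx, hx'⟩ := Set.not_disjoint_iff.1 h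
  constructor
  · by_contra! hAu
    exact Set.disjoint_left.1 hAB ⟨hAu, hx.1.trans hx'.2⟩ hg.left_mem
  · by_contra! hvB
    exact Set.disjoint_left.1 hAB ⟨hx'.1.trans hx.2, hvB⟩ hg.right_mem

end IsGap

variable [TopologicalSpace α] [OrderTopology α]

theorem frequently_nhdsGT_apply {f : α → α} {S : Set α} {x : α} (hf : ContinuousAt f x)
    (hmono : Monotone f) (hmaps : MapsTo f S S)
    (hflat : ∀ p q, p < q → f p = f q → Disjoint (Ioo p q) S)
    (h : ∃ᶠ y in 𝓝[>] x, y ∈ S) : ∃ᶠ y in 𝓝[>] f x, y ∈ S := by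
  have hlt : ∀ y ∈ S, x < y → f x < f y := by
    intro y hy hxy
    refine (hmono hxy.le).lt_of_ne fun heq => ?_
    obtain ⟨z, hzS, hz⟩ := (h.and_eventually (Ioo_mem_nhdsGT hxy)).exists
    exact Set.disjoint_left.1 (hflat x y hxy heq) hz hzS
  rw [frequently_iff_neBot] at h ⊢
  have : Tendsto f (𝓝[>] x ⊓ 𝓟 {y | y ∈ S}) (𝓝[>] f x ⊓ 𝓟 {y | y ∈ S}) := by
    rw [← nhdsWithin_inter', ← nhdsWithin_inter']
    refine tendsto_nhdsWithin_of_tendsto_nhds_of_eventually_within f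
      (hf.tendsto.mono_left nhdsWithin_le_nhds) ?_
    filter_upwards [self_mem_nhdsWithin] with y hy using ⟨hlt y hy.2 hy.1, hmaps hy.2⟩
  exact this.neBot

theorem frequently_nhdsLT_apply {f : α → α} {S : Set α} {x : α} (hf : ContinuousAt f x)
    (hmono : Monotone f) (hmaps : MapsTo f S S)
    (hflat : ∀ p q, p < q → f p = f q → Disjoint (Ioo p q) S)
    (h : ∃ᶠ y in 𝓝[<] x, y ∈ S) : ∃ᶠ y in 𝓝[<] f x, y ∈ S :=
  frequently_nhdsGT_apply (α := αᵒᵈ) hf hmono.dual hmaps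
    (fun p q hpq he => Set.disjoint_left.2 fun _ hy =>
      Set.disjoint_left.1 (hflat q p hpq he.symm) ⟨hy.2, hy.1⟩) h

theorem AccPt.frequently_nhdsLT {S : Set α} {p q : α} (hacc : AccPt p (𝓟 S)) (hpq : p < q)
    (hgap : Disjoint (Ioo p q) S) : ∃ᶠ y in 𝓝[<] p, y ∈ S := by
  rw [accPt_iff_frequently_nhdsNE, ← nhdsLT_sup_nhdsGT, frequently_sup] at hacc
  refine hacc.resolve_right fun h => ?_
  obtain ⟨z, hzS, hz⟩ := (h.and_eventually (Ioo_mem_nhdsGT hpq)).exists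
  exact Set.disjoint_left.1 hgap hz hzS

theorem AccPt.frequently_nhdsGT {S : Set α} {p q : α} (hacc : AccPt p (𝓟 S)) (hqp : q < p)
    (hgap : Disjoint (Ioo q p) S) : ∃ᶠ y in 𝓝[>] p, y ∈ S :=
  AccPt.frequently_nhdsLT (α := αᵒᵈ) hacc hqp
    (Set.disjoint_left.2 fun _ hy => Set.disjoint_left.1 hgap ⟨hy.2, hy.1⟩)

section Iterate

variable {f : α → α} {S : Set α}

theorem frequently_nhdsGT_iterate (hf : Continuous f) (hmono : Monotone f) (hmaps : MapsTo f S S)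
    (hflat : ∀ p q, p < q → f p = f q → Disjoint (Ioo p q) S) {x : α}
    (h : ∃ᶠ y in 𝓝[>] x, y ∈ S) (n : ℕ) : ∃ᶠ y in 𝓝[>] f^[n] x, y ∈ S := by
  induction n with
  | zero => exact h
  | succ n ih =>
    rw [iterate_succ_apply']
    exact frequently_nhdsGT_apply hf.continuousAt hmono hmaps hflat ih

theorem frequently_nhdsLT_iterate (hf : Continuous f) (hmono : Monotone f) (hmaps : MapsTo f S S)
    (hflat : ∀ p q, p < q → f p = f q → Disjoint (Ioo p q) S) {x : α}
    (h : ∃ᶠ y in 𝓝[<] x, y ∈ S) (n : ℕ) : ∃ᶠ y in 𝓝[<] f^[n] x, y ∈ S := by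
  induction n with
  | zero => exact h
  | succ n ih =>
    rw [iterate_succ_apply']
    exact frequently_nhdsLT_apply hf.continuousAt hmono hmaps hflat ih

/-- The ends of the gap `(p, q)` of the perfect set `S` are approached by `S` from outside, and
`f` preserves this; so their common image is approached from both sides, unlike an end of an
interval of constancy. -/
theorem iterate_notMem_Icc (hf : Continuous f) (hmono : Monotone f) (hmaps : MapsTo f S S)
    (hflat : ∀ p q, p < q → f p = f q → Disjoint (Ioo p q) S) (hS : Preperfect S)
    {p q : α} (hp : p ∈ S) (hq : q ∈ S) (hpq : p < q) (he : f p = f q)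
    {A B : α} (hAB : A < B) (heAB : f A = f B) {n : ℕ} (hn : 0 < n) : f^[n] p ∉ Icc A B := by
  intro hmem
  have hgapAB := hflat A B hAB heAB
  have hleft : ∃ᶠ y in 𝓝[<] f^[n] p, y ∈ S := frequently_nhdsLT_iterate hf hmono hmaps hflat
    ((hS p hp).frequently_nhdsLT hpq (hflat p q hpq he)) n
  have hright : ∃ᶠ y in 𝓝[>] f^[n] p, y ∈ S := by
    rw [← hmono.iterate_eq_of_mem_Icc he ⟨hpq.le, le_rfl⟩ hn]
    exact frequently_nhdsGT_iterate hf hmono hmaps hflat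
      ((hS q hq).frequently_nhdsGT hpq (hflat p q hpq he)) n
  rcases hmem.1.eq_or_lt with hA | hA
  · rw [← hA] at hright
    obtain ⟨y, hyS, hy⟩ := (hright.and_eventually (Ioo_mem_nhdsGT hAB)).exists
    exact Set.disjoint_left.1 hgapAB hy hyS
  rcases hmem.2.eq_or_lt with hB | hB
  · rw [hB] at hleft
    obtain ⟨y, hyS, hy⟩ := (hleft.and_eventually (Ioo_mem_nhdsLT hAB)).exists
    exact Set.disjoint_left.1 hgapAB hy hyS
  · exact Set.disjoint_left.1 hgapAB ⟨hA, hB⟩ (hmaps.iterate n hp)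

end Iterate

end Order

section MinimalSet

variable {X : Type*} [TopologicalSpace X] {f : X → X} {Z : Set X}

theorem IsMinimalSet.subset_image [T2Space X] (hZ : IsMinimalSet f Z) (hf : Continuous f) :
    Z ⊆ f '' Z := by
  obtain ⟨⟨z, hz⟩, hcpt, hmaps, hdense⟩ := hZ
  have horbit : fwdOrbit f (f z) ⊆ f '' Z := by
    rintro _ ⟨m, rfl⟩
    exact ⟨f^[m] z, hmaps.iterate m hz,
      (iterate_succ_apply' f m z).symm.trans (iterate_succ_apply f m z)⟩
  exact (hdense _ (hmaps hz)).trans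
    ((hcpt.image hf).isClosed.closure_subset_iff.2 horbit)

theorem IsMinimalSet.disjoint_of_isOpen (hZ : IsMinimalSet f Z)
    (hper : ∀ n, 0 < n → ∀ z, f^[n] z ≠ z) {U : Set X} (hU : IsOpen U)
    (hconst : ∀ x ∈ U, ∀ y ∈ U, f x = f y) : Disjoint U Z := by
  obtain ⟨-, -, hmaps, hdense⟩ := hZ
  refine Set.disjoint_left.2 fun x hxU hxZ => ?_
  obtain ⟨_, hyU, m, rfl⟩ :=
    mem_closure_iff.1 (hdense _ (hmaps hxZ) hxZ) U hU hxU
  refine hper (m + 1) m.succ_pos (f x) ?_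
  rw [iterate_succ_apply']
  exact hconst _ hyU x hxU

theorem IsMinimalSet.preperfect (hZ : IsMinimalSet f Z)
    (hper : ∀ n, 0 < n → ∀ z, f^[n] z ≠ z) : Preperfect Z := by
  obtain ⟨-, -, hmaps, hdense⟩ := hZ
  intro z hz
  refine accPt_iff_nhds.2 fun U hU => ?_
  obtain ⟨_, hyU, m, rfl⟩ := mem_closure_iff_nhds.1 (hdense _ (hmaps hz) hz) U hU
  refine ⟨_, ⟨hyU, hmaps.iterate m (hmaps hz)⟩, ?_⟩
  have := hper (m + 1) m.succ_pos z
  rwa [iterate_succ_apply] at this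

end MinimalSet

theorem exists_iterate_mapsTo_self {X ι : Type*} [Finite ι] [Nonempty ι] {f : X → X}
    {A : ι → Set X} (h : ∀ i, ∃ n, 0 < n ∧ ∃ j, MapsTo f^[n] (A i) (A j)) :
    ∃ i n, 0 < n ∧ MapsTo f^[n] (A i) (A i) := by
  choose n hn σ hσ using h
  have hchain : ∀ i r, ∃ N, r ≤ N ∧ MapsTo f^[N] (A i) (A (σ^[r] i)) := by
    intro i r
    induction r with
    | zero => exact ⟨0, le_rfl, mapsTo_id _⟩
    | succ r ih =>
      obtain ⟨N, hN, hmaps⟩ := ih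
      refine ⟨n (σ^[r] i) + N, by have := hn (σ^[r] i); omega, ?_⟩
      rw [iterate_add, iterate_succ_apply']
      exact (hσ _).comp hmaps
  obtain ⟨p, q, hpq, heq⟩ :=
    Finite.exists_ne_map_eq_of_infinite fun r => σ^[r] (Classical.arbitrary ι)
  wlog hlt : p < q generalizing p q
  · exact this q p hpq.symm heq.symm (hpq.lt_or_gt.resolve_left hlt)
  obtain ⟨N, hN, hmaps⟩ := hchain (σ^[p] (Classical.arbitrary ι)) (q - p)
  rw [← iterate_add_apply, Nat.sub_add_cancel hlt.le, ← heq] at hmaps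
  exact ⟨_, N, by omega, hmaps⟩

theorem mk1_eq_mk1_iff {x y : ℝ} : mk1 x = mk1 y ↔ ∃ t : ℤ, x = y + t := by
  rw [mk1, mk1, QuotientAddGroup.eq_iff_sub_mem, AddSubgroup.mem_zmultiples_iff]
  simp only [zsmul_eq_mul, mul_one, eq_sub_iff_add_eq, eq_comm (a := x), add_comm]

theorem mk1_add_intCast (x : ℝ) (t : ℤ) : mk1 (x + t) = mk1 x :=
  mk1_eq_mk1_iff.2 ⟨t, rfl⟩

theorem iterate_mk1 {ht : ℝ → ℝ} {h : Circle1 → Circle1} (hlift : ∀ x, h (mk1 x) = mk1 (ht x))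
    (n : ℕ) (x : ℝ) : h^[n] (mk1 x) = mk1 (ht^[n] x) :=
  (Semiconj.iterate_right (fun x => (hlift x).symm) n x).symm

namespace IsSemiMonotoneLift

variable {ht : ℝ → ℝ} {h : Circle1 → Circle1}

protected theorem continuous (hsm : IsSemiMonotoneLift ht) : Continuous ht := hsm.1

protected theorem monotone (hsm : IsSemiMonotoneLift ht) : Monotone ht := hsm.2.1

theorem map_add_one (hsm : IsSemiMonotoneLift ht) (x : ℝ) : ht (x + 1) = ht x + 1 := hsm.2.2 x

def toCircleDeg1Lift (hsm : IsSemiMonotoneLift ht) : CircleDeg1Lift :=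
  ⟨⟨ht, hsm.monotone⟩, hsm.map_add_one⟩

@[simp]
theorem coe_toCircleDeg1Lift (hsm : IsSemiMonotoneLift ht) : ⇑hsm.toCircleDeg1Lift = ht := rfl

theorem map_add_intCast (hsm : IsSemiMonotoneLift ht) (x : ℝ) (t : ℤ) : ht (x + t) = ht x + t :=
  hsm.toCircleDeg1Lift.map_add_int x t

theorem continuous_of_lift (hsm : IsSemiMonotoneLift ht) (hlift : ∀ x, h (mk1 x) = mk1 (ht x)) :
    Continuous h := by
  rw [(QuotientAddGroup.isQuotientMap_mk _).continuous_iff]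
  exact (continuous_quotient_mk'.comp hsm.continuous).congr fun x => (hlift x).symm

theorem iterate_ne_self_of_irrational (hsm : IsSemiMonotoneLift ht)
    (hlift : ∀ x, h (mk1 x) = mk1 (ht x)) {α : ℝ} (hirr : Irrational α) (hrot : HasRotNum ht α)
    (n : ℕ) (hn : 0 < n) (z : Circle1) : h^[n] z ≠ z := by
  obtain ⟨x, rfl⟩ := QuotientAddGroup.mk_surjective z
  intro hx
  obtain ⟨t, hxt⟩ := mk1_eq_mk1_iff.1 ((iterate_mk1 hlift n x).symm.trans hx)
  set F := hsm.toCircleDeg1Lift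
  have hτ : F.translationNumber = α := tendsto_nhds_unique (F.tendsto_translationNumber x)
    (by simp only [F, CircleDeg1Lift.coe_pow, coe_toCircleDeg1Lift]; exact hrot x)
  refine hirr ⟨t / n, ?_⟩
  rw [← hτ, F.translationNumber_of_map_pow_eq_add_int (by simpa [F, CircleDeg1Lift.coe_pow]) hn]
  push_cast
  rfl

theorem exists_isFlatSpot_superset (hsm : IsSemiMonotoneLift ht) {p q : ℝ} (hpq : p < q)
    (he : ht p = ht q) : ∃ c d, IsFlatSpot ht c d ∧ c ≤ p ∧ q ≤ d := by
  obtain ⟨hcont, hmono, hdeg⟩ := hsm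
  set S := ht ⁻¹' {ht p}
  have hlevel : ∀ x ∈ S, ∀ y ∈ S, y < x + 1 := fun x hx y hy => by
    by_contra! hxy
    have := hmono hxy
    rw [hdeg] at this
    simp only [S, mem_preimage, mem_singleton_iff] at hx hy
    linarith
  have hpS : p ∈ S := rfl
  have hbddb : BddBelow S := ⟨p - 1, fun y hy => by linarith [hlevel y hy p hpS]⟩
  have hbdda : BddAbove S := ⟨p + 1, fun y hy => (hlevel p hpS y hy).le⟩
  have hS : IsClosed S := isClosed_singleton.preimage hcont
  have hc := hS.csInf_mem ⟨p, hpS⟩ hbddb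
  have hd := hS.csSup_mem ⟨p, hpS⟩ hbdda
  have hcp : sInf S ≤ p := csInf_le hbddb hpS
  have hqd : q ≤ sSup S := le_csSup hbdda he.symm
  have hconst : ∀ x ∈ Icc (sInf S) (sSup S), ht x = ht (sInf S) :=
    fun x => hmono.apply_eq_of_mem_Icc (hc.trans hd.symm)
  refine ⟨sInf S, sSup S, ⟨hcp.trans_lt (hpq.trans_le hqd), ?_, hconst, ?_⟩, hcp, hqd⟩
  · linarith [hlevel _ hc _ hd]
  · intro a' b' ha' hb' hconst'
    have hmem : ∀ x ∈ Icc a' b', x ∈ S := fun x hx => (hconst' x hx).trans hc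
    have hab' : a' ≤ b' := ha'.trans ((hcp.trans (hpq.le.trans hqd)).trans hb')
    exact ⟨le_antisymm ha' (csInf_le hbddb (hmem a' ⟨le_rfl, hab'⟩)),
      le_antisymm (le_csSup hbdda (hmem b' ⟨hab', le_rfl⟩)) hb'⟩

end IsSemiMonotoneLift

section Lift

variable {ht : ℝ → ℝ} {h : Circle1 → Circle1} {Z : Set Circle1}

theorem add_intCast_mem_preimage_mk1 {x : ℝ} (t : ℤ) : x + t ∈ mk1 ⁻¹' Z ↔ x ∈ mk1 ⁻¹' Z := by
  simp only [mem_preimage, mk1_add_intCast]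

theorem IsMinimalSet.mapsTo_preimage_mk1 (hlift : ∀ x, h (mk1 x) = mk1 (ht x))
    (hZ : IsMinimalSet h Z) : MapsTo ht (mk1 ⁻¹' Z) (mk1 ⁻¹' Z) := fun x hx => by
  simpa only [mem_preimage, hlift] using hZ.2.2.1 hx

theorem IsMinimalSet.preimage_mk1_subset_image (hsm : IsSemiMonotoneLift ht)
    (hlift : ∀ x, h (mk1 x) = mk1 (ht x)) (hZ : IsMinimalSet h Z) :
    mk1 ⁻¹' Z ⊆ ht '' (mk1 ⁻¹' Z) := by
  intro x hx
  obtain ⟨_, hξZ, hξx⟩ := hZ.subset_image (hsm.continuous_of_lift hlift) hx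
  obtain ⟨ξ, rfl⟩ := QuotientAddGroup.mk_surjective ‹Circle1›
  obtain ⟨t, hxt⟩ := mk1_eq_mk1_iff.1 (hξx.symm.trans (hlift ξ))
  exact ⟨ξ + t, (add_intCast_mem_preimage_mk1 t).2 hξZ, by rw [hsm.map_add_intCast, hxt]⟩

theorem IsMinimalSet.disjoint_Ioo_preimage_mk1 (hsm : IsSemiMonotoneLift ht)
    (hlift : ∀ x, h (mk1 x) = mk1 (ht x)) (hper : ∀ n, 0 < n → ∀ z, h^[n] z ≠ z)
    (hZ : IsMinimalSet h Z) {A B : ℝ} (he : ht A = ht B) : Disjoint (Ioo A B) (mk1 ⁻¹' Z) := by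
  have hU := hZ.disjoint_of_isOpen hper
    (QuotientAddGroup.isOpenMap_coe _ (isOpen_Ioo (a := A) (b := B))) ?_
  · exact Set.disjoint_left.2 fun x hx hxZ => Set.disjoint_left.1 hU ⟨x, hx, rfl⟩ hxZ
  · rintro _ ⟨x, hx, rfl⟩ _ ⟨y, hy, rfl⟩
    change h (mk1 x) = h (mk1 y)
    rw [hlift, hlift, hsm.monotone.apply_eq_of_mem_Icc he (Ioo_subset_Icc_self hx),
      hsm.monotone.apply_eq_of_mem_Icc he (Ioo_subset_Icc_self hy)]

theorem IsMinimalSet.preperfect_preimage_mk1 (hper : ∀ n, 0 < n → ∀ z, h^[n] z ≠ z)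
    (hZ : IsMinimalSet h Z) : Preperfect (mk1 ⁻¹' Z) := by
  intro x hx
  refine accPt_iff_nhds.2 fun U hU => ?_
  obtain ⟨_, ⟨⟨y, hyU, rfl⟩, hyZ⟩, hne⟩ := accPt_iff_nhds.1 (hZ.preperfect hper _ hx) _
    (QuotientAddGroup.isOpenMap_coe.image_mem_nhds hU)
  exact ⟨y, ⟨hyU, hyZ⟩, fun hyx => hne (hyx ▸ rfl)⟩

theorem IsGap.add_intCast {u v : ℝ} (hg : IsGap (mk1 ⁻¹' Z) u v) (t : ℤ) :
    IsGap (mk1 ⁻¹' Z) (u + t) (v + t) := by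
  refine ⟨(add_intCast_mem_preimage_mk1 t).2 hg.left_mem,
    (add_intCast_mem_preimage_mk1 t).2 hg.right_mem, Set.disjoint_left.2 fun x hx hxZ => ?_⟩
  refine Set.disjoint_left.1 hg.disjoint (show x + (-t : ℤ) ∈ Ioo u v by
    push_cast; constructor <;> linarith [hx.1, hx.2]) ((add_intCast_mem_preimage_mk1 _).2 hxZ)

theorem IsGap.le_add_one {u v : ℝ} (hg : IsGap (mk1 ⁻¹' Z) u v) : v ≤ u + 1 := by
  by_contra! hv
  refine Set.disjoint_left.1 hg.disjoint ⟨lt_add_one u, hv⟩ ?_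
  exact_mod_cast (add_intCast_mem_preimage_mk1 1).2 hg.left_mem

theorem exists_isGap_superset (hne : Z.Nonempty) (hcl : IsClosed Z) {a b : ℝ}
    (hdisj : Disjoint (Ioo a b) (mk1 ⁻¹' Z)) :
    ∃ u v, IsGap (mk1 ⁻¹' Z) u v ∧ u ≤ a ∧ b ≤ v := by
  set S := mk1 ⁻¹' Z
  have hS : IsClosed S := hcl.preimage continuous_quotient_mk'
  obtain ⟨x, hx⟩ : ∃ x, x ∈ S := by
    obtain ⟨z, hz⟩ := hne
    obtain ⟨x, rfl⟩ := QuotientAddGroup.mk_surjective z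
    exact ⟨x, hz⟩
  have hbdda : BddAbove (S ∩ Iic a) := ⟨a, fun _ hy => hy.2⟩
  have hbddb : BddBelow (S ∩ Ici b) := ⟨b, fun _ hy => hy.2⟩
  have hu := (hS.inter isClosed_Iic).csSup_mem ⟨x + ⌊a - x⌋,
    (add_intCast_mem_preimage_mk1 _).2 hx, by rw [mem_Iic]; linarith [Int.floor_le (a - x)]⟩ hbdda
  have hv := (hS.inter isClosed_Ici).csInf_mem ⟨x + ⌈b - x⌉,
    (add_intCast_mem_preimage_mk1 _).2 hx, by rw [mem_Ici]; linarith [Int.le_ceil (b - x)]⟩ hbddb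
  refine ⟨_, _, ⟨hu.1, hv.1, Set.disjoint_left.2 fun y hy hyS => ?_⟩, hu.2, hv.2⟩
  rcases le_or_gt y a with hya | hay
  · exact (le_csSup hbdda ⟨hyS, hya⟩).not_gt hy.1
  rcases le_or_gt b y with hby | hyb
  · exact (csInf_le hbddb ⟨hyS, hby⟩).not_gt hy.2
  · exact Set.disjoint_left.1 hdisj ⟨hay, hyb⟩ hyS

end Lift

/-- Translated into `(0, 2)`, the intervals become pairwise disjoint, so their total length is at
most `2`. -/
theorem finite_setOf_le_sub {ι : Type*} {u v : ι → ℝ} (hlen : ∀ i, v i ≤ u i + 1)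
    (hdisj : Pairwise fun i j => ∀ t : ℤ, Disjoint (Ioo (u i) (v i)) (Ioo (u j + t) (v j + t)))
    {c : ℝ} (hc : 0 < c) : {i | c ≤ v i - u i}.Finite := by
  by_contra hinf
  obtain ⟨s, hs, hcard⟩ := Set.Infinite.exists_subset_card_eq hinf (⌈2 / c⌉₊ + 1)
  set J : ι → Set ℝ := fun i => Ioo (u i - ⌊u i⌋) (v i - ⌊u i⌋)
  have hJ : (s : Set ι).PairwiseDisjoint J := by
    intro i _ j _ hij
    have := (hdisj hij (⌊u i⌋ - ⌊u j⌋)).preimage (· + (⌊u i⌋ : ℝ))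
    refine this.mono (fun x hx => ?_) (fun x hx => ?_) <;>
      simp only [J, mem_preimage, mem_Ioo, Int.cast_sub] at hx ⊢ <;>
      constructor <;> linarith [hx.1, hx.2]
  have hsub : (⋃ i ∈ s, J i) ⊆ Ioo 0 2 := by
    simp only [iUnion_subset_iff]
    intro i _ x hx
    simp only [J, mem_Ioo] at hx
    constructor <;> linarith [hx.1, hx.2, Int.floor_le (u i), Int.lt_floor_add_one (u i), hlen i]
  have hle : ∑ i ∈ s, ENNReal.ofReal c ≤ ENNReal.ofReal 2 := by
    calc ∑ i ∈ s, ENNReal.ofReal c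
        ≤ ∑ i ∈ s, volume (J i) := Finset.sum_le_sum fun i hi => by
          rw [Real.volume_Ioo]
          have hci : c ≤ v i - u i := hs hi
          exact ENNReal.ofReal_le_ofReal (by linarith)
      _ = volume (⋃ i ∈ s, J i) := (measure_biUnion_finset hJ fun _ _ => measurableSet_Ioo).symm
      _ ≤ volume (Ioo (0 : ℝ) 2) := measure_mono hsub
      _ = ENNReal.ofReal 2 := by rw [Real.volume_Ioo, sub_zero]
  rw [Finset.sum_const, hcard, nsmul_eq_mul, ← ENNReal.ofReal_natCast,
    ← ENNReal.ofReal_mul (by positivity),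
    ENNReal.ofReal_le_ofReal_iff zero_le_two] at hle
  have := Nat.le_ceil (2 / c)
  rw [div_le_iff₀ hc] at this
  push_cast at hle
  nlinarith

theorem sub_lt_sub_of_one_lt_deriv {f D : ℝ → ℝ} {P : Set ℝ} (hf : Continuous f)
    (hD : ∀ x ∈ P, 1 < D x ∧ HasDerivWithinAt f (D x) P x) {u v : ℝ} (huv : u < v)
    (hP : Ioo u v ⊆ P) : v - u < f v - f u := by
  have hP' : interior (Icc u v) ⊆ P := by rwa [interior_Icc]
  have := strictMonoOn_of_hasDerivWithinAt_pos (convex_Icc u v) (f := fun x => f x - x)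
    (f' := fun x => D x - 1) (hf.sub continuous_id).continuousOn
    (fun x hx => ((hD x (hP' hx)).2.mono hP').sub (hasDerivWithinAt_id x _))
    (fun x hx => sub_pos.2 (hD x (hP' hx)).1)
    (left_mem_Icc.2 huv.le) (right_mem_Icc.2 huv.le) huv
  simp only at this
  linarith

section FlatSpots

variable {ht : ℝ → ℝ} {h : Circle1 → Circle1} {Z : Set Circle1} {l : ℕ} {a b : Fin l → ℝ}

theorem IsFlatSpot.map_right {p q : ℝ} (hfs : IsFlatSpot ht p q) : ht q = ht p :=
  hfs.2.2.1 q ⟨hfs.1.le, le_rfl⟩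

theorem IsFlatSpot.disjoint_Ioo_add_intCast (hsm : IsSemiMonotoneLift ht)
    (hlift : ∀ x, h (mk1 x) = mk1 (ht x)) (hper : ∀ n, 0 < n → ∀ z, h^[n] z ≠ z)
    (hZ : IsMinimalSet h Z) {p q : ℝ} (hfs : IsFlatSpot ht p q) (k : ℤ) :
    Disjoint (Ioo (p + k) (q + k)) (mk1 ⁻¹' Z) :=
  hZ.disjoint_Ioo_preimage_mk1 hsm hlift hper
    (by rw [hsm.map_add_intCast, hsm.map_add_intCast, hfs.map_right])

theorem IsGap.pairwise_disjoint_iterate (hsm : IsSemiMonotoneLift ht)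
    (hlift : ∀ x, h (mk1 x) = mk1 (ht x)) (hper : ∀ n, 0 < n → ∀ z, h^[n] z ≠ z)
    (hZ : IsMinimalSet h Z) {u v : ℝ} (hg : IsGap (mk1 ⁻¹' Z) u v) :
    Pairwise fun m m' => ∀ t : ℤ,
      Disjoint (Ioo (ht^[m] u) (ht^[m] v)) (Ioo (ht^[m'] u + t) (ht^[m'] v + t)) := by
  have hgap := hg.iterate hsm.monotone (hZ.mapsTo_preimage_mk1 hlift)
    (hZ.preimage_mk1_subset_image hsm hlift)
  have hnot : ∀ m m' (t : ℤ), m < m' → ht^[m'] u ≠ ht^[m] u + t := by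
    intro m m' t hmm' heq
    refine hper (m' - m) (by omega) (mk1 (ht^[m] u)) ?_
    rw [iterate_mk1 hlift, ← iterate_add_apply, Nat.sub_add_cancel hmm'.le, heq, mk1_add_intCast]
  intro m m' hmm' t
  by_contra hnd
  have heq := (hgap m).left_eq ((hgap m').add_intCast t) hnd
  rcases hmm'.lt_or_gt with hlt | hgt
  · exact hnot m m' (-t) hlt (by push_cast; linarith)
  · exact hnot m' m t hgt heq

/-- A gap of the minimal set cannot stay open forever: its images are gaps, pairwise disjoint
modulo `ℤ`, so they eventually avoid the flat spots and are expanded by `ht`, while their total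
length is finite. -/
theorem IsGap.exists_iterate_eq (hsm : IsSemiMonotoneLift ht)
    (hlift : ∀ x, h (mk1 x) = mk1 (ht x)) (hper : ∀ n, 0 < n → ∀ z, h^[n] z ≠ z)
    (hZ : IsMinimalSet h Z) (hfs : ∀ i, IsFlatSpot ht (a i) (b i)) {D : ℝ → ℝ}
    (hD : ∀ x ∈ flatComplR a b, 1 < D x ∧ HasDerivWithinAt ht (D x) (flatComplR a b) x)
    {u v : ℝ} (hg : IsGap (mk1 ⁻¹' Z) u v) (huv : u ≤ v) : ∃ m, ht^[m] u = ht^[m] v := by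
  by_contra! hne
  set U : ℕ → ℝ := fun m => ht^[m] u
  set V : ℕ → ℝ := fun m => ht^[m] v
  have hlt : ∀ m, U m < V m := fun m => (hsm.monotone.iterate m huv).lt_of_ne (hne m)
  have hgap : ∀ m, IsGap (mk1 ⁻¹' Z) (U m) (V m) :=
    hg.iterate hsm.monotone (hZ.mapsTo_preimage_mk1 hlift) (hZ.preimage_mk1_subset_image hsm hlift)
  have hfin : ∀ c, 0 < c → {m | c ≤ V m - U m}.Finite := fun c hc => finite_setOf_le_sub
    (fun m => (hgap m).le_add_one) (hg.pairwise_disjoint_iterate hsm hlift hper hZ) hc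
  have hbad : {m | ¬Ioo (U m) (V m) ⊆ flatComplR a b}.Finite := by
    refine (Set.finite_iUnion fun i => hfin _ (sub_pos.2 (hfs i).1)).subset fun m hm => ?_
    replace hm : ¬Ioo (U m) (V m) ⊆ flatComplR a b := hm
    simp only [Set.not_subset, flatComplR, mem_ofPred_eq, not_forall, not_not] at hm
    obtain ⟨x, hx, i, k, hxk⟩ := hm
    have := (hgap m).le_and_le_of_not_disjoint
      ((hfs i).disjoint_Ioo_add_intCast hsm hlift hper hZ k) (Set.not_disjoint_iff.2 ⟨x, hx, hxk⟩)
    exact mem_iUnion.2 ⟨i, show b i - a i ≤ V m - U m by linarith [this.1, this.2]⟩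
  obtain ⟨M, hM⟩ := hbad.bddAbove
  have hgrow : ∀ m, M < m → V m - U m ≤ V (m + 1) - U (m + 1) := by
    intro m hm
    have := sub_lt_sub_of_one_lt_deriv hsm.continuous hD (hlt m)
      (not_not.1 fun h => hm.not_ge (hM h))
    simp only [U, V, iterate_succ_apply']
    linarith
  refine Set.Infinite.mono (fun m hm => ?_) (Set.Ici_infinite (M + 1))
    (hfin _ (sub_pos.2 (hlt (M + 1))))
  change V (M + 1) - U (M + 1) ≤ V m - U m
  induction m, (hm : M + 1 ≤ m) using Nat.le_induction with
  | base => exact le_rfl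
  | succ m hm ih => exact ih.trans (hgrow m (by omega))

theorem IsFlatSpot.forall_iterate_mem_image_iff (hsm : IsSemiMonotoneLift ht)
    (hlift : ∀ x, h (mk1 x) = mk1 (ht x)) {p q : ℝ} (hfs : IsFlatSpot ht p q) {A B : ℝ} {n : ℕ}
    (hn : 0 < n) : (∀ x ∈ Icc p q, h^[n] (mk1 x) ∈ mk1 '' Icc A B) ↔
      ∃ k : ℤ, ht^[n] p ∈ Icc (A + k) (B + k) := by
  constructor
  · intro hmaps
    obtain ⟨y, hy, hyp⟩ := hmaps p ⟨le_rfl, hfs.1.le⟩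
    rw [iterate_mk1 hlift] at hyp
    obtain ⟨k, hk⟩ := mk1_eq_mk1_iff.1 hyp.symm
    exact ⟨k, by rw [hk]; exact ⟨by linarith [hy.1], by linarith [hy.2]⟩⟩
  · rintro ⟨k, hk⟩ x hx
    rw [iterate_mk1 hlift, hsm.monotone.iterate_eq_of_mem_Icc hfs.map_right.symm hx hn]
    refine ⟨ht^[n] p - k, ⟨by linarith [hk.1], by linarith [hk.2]⟩, ?_⟩
    simpa using (mk1_add_intCast (ht^[n] p - k) k).symm

theorem IsFlatSpot.iterate_notMem_Icc_of_mem (hsm : IsSemiMonotoneLift ht)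
    (hlift : ∀ x, h (mk1 x) = mk1 (ht x)) (hper : ∀ n, 0 < n → ∀ z, h^[n] z ≠ z)
    (hZ : IsMinimalSet h Z) {p q A B : ℝ} (hfs : IsFlatSpot ht p q) (hp : mk1 p ∈ Z)
    (hq : mk1 q ∈ Z) (hfs' : IsFlatSpot ht A B) (k : ℤ) {n : ℕ} (hn : 0 < n) :
    ht^[n] p ∉ Icc (A + k) (B + k) :=
  iterate_notMem_Icc hsm.continuous hsm.monotone (hZ.mapsTo_preimage_mk1 hlift)
    (fun _ _ _ he => hZ.disjoint_Ioo_preimage_mk1 hsm hlift hper he)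
    (hZ.preperfect_preimage_mk1 hper) hp hq hfs.1 hfs.map_right.symm
    (by linarith [hfs'.1]) (by rw [hsm.map_add_intCast, hsm.map_add_intCast, hfs'.map_right]) hn

theorem exists_iterate_mem_Icc_of_not_mem (hsm : IsSemiMonotoneLift ht)
    (hlift : ∀ x, h (mk1 x) = mk1 (ht x)) (hper : ∀ n, 0 < n → ∀ z, h^[n] z ≠ z)
    (hZ : IsMinimalSet h Z) (hfs : ∀ i, IsFlatSpot ht (a i) (b i))
    (hall : ∀ a' b' : ℝ, IsFlatSpot ht a' b' → ∃ i, ∃ n : ℤ, a' = a i + n ∧ b' = b i + n)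
    {D : ℝ → ℝ}
    (hD : ∀ x ∈ flatComplR a b, 1 < D x ∧ HasDerivWithinAt ht (D x) (flatComplR a b) x)
    {i : Fin l} (hi : ¬(mk1 (a i) ∈ Z ∧ mk1 (b i) ∈ Z)) :
    ∃ n, 0 < n ∧ ∃ (i' : Fin l) (k : ℤ), ht^[n] (a i) ∈ Icc (a i' + k) (b i' + k) := by
  obtain ⟨u, v, hg, hua, hbv⟩ := exists_isGap_superset hZ.1 hZ.2.1.isClosed
    (hZ.disjoint_Ioo_preimage_mk1 hsm hlift hper (hfs i).map_right.symm)
  have hab := (hfs i).1.le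
  have huv : u < v := hua.trans_lt ((hfs i).1.trans_le hbv)
  have hcol := hg.exists_iterate_eq hsm hlift hper hZ hfs hD huv.le
  have he := Nat.find_spec hcol
  obtain ⟨m, hm⟩ : ∃ m, Nat.find hcol = m + 1 :=
    Nat.exists_eq_add_one_of_ne_zero fun h0 => huv.ne (by rwa [h0] at he)
  have hlt : ht^[m] u < ht^[m] v :=
    (hsm.monotone.iterate m huv.le).lt_of_ne (Nat.find_min hcol (by omega))
  rw [hm, iterate_succ_apply', iterate_succ_apply'] at he
  rcases m.eq_zero_or_pos with rfl | hm_pos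
  · -- `ht` is constant on `[u, v] ⊇ [a i, b i]`, so maximality of the flat spot gives `u = a i`
    simp only [iterate_zero, id] at he
    obtain ⟨rfl, rfl⟩ := (hfs i).2.2.2 u v hua hbv fun x hx =>
      (hsm.monotone.apply_eq_of_mem_Icc he hx).trans
        (hsm.monotone.apply_eq_of_mem_Icc he ⟨hua, hab.trans hbv⟩).symm
    exact (hi ⟨hg.left_mem, hg.right_mem⟩).elim
  · obtain ⟨c, d, hcd, hc, hd⟩ := hsm.exists_isFlatSpot_superset hlt he
    obtain ⟨i', k, rfl, rfl⟩ := hall c d hcd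
    exact ⟨m, hm_pos, i', k, hc.trans (hsm.monotone.iterate m hua),
      (hsm.monotone.iterate m (hab.trans hbv)).trans hd⟩

theorem IsFlatSpot.not_mapsTo_iterate (hsm : IsSemiMonotoneLift ht)
    (hlift : ∀ x, h (mk1 x) = mk1 (ht x)) (hper : ∀ n, 0 < n → ∀ z, h^[n] z ≠ z) {p q : ℝ}
    (hfs : IsFlatSpot ht p q) {n : ℕ} (hn : 0 < n) :
    ¬MapsTo h^[n] (mk1 '' Icc p q) (mk1 '' Icc p q) := by
  intro hmaps
  obtain ⟨y, hy, hyp⟩ := hmaps (mem_image_of_mem mk1 ⟨le_rfl, hfs.1.le⟩)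
  refine hper n hn (mk1 y) ?_
  rw [iterate_mk1 hlift, hsm.monotone.iterate_eq_of_mem_Icc hfs.map_right.symm hy hn,
    ← iterate_mk1 hlift, hyp]

theorem IsSemiMonotoneLift.nonempty_of_one_lt_deriv (hsm : IsSemiMonotoneLift ht) {D : ℝ → ℝ}
    (hD : ∀ x ∈ flatComplR a b, 1 < D x ∧ HasDerivWithinAt ht (D x) (flatComplR a b) x) :
    Nonempty (Fin l) := by
  by_contra hl
  have huniv : flatComplR a b = univ := eq_univ_of_forall fun _ i => (hl ⟨i⟩).elim
  have := sub_lt_sub_of_one_lt_deriv hsm.continuous hD zero_lt_one (huniv ▸ subset_univ _)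
  have h1 := hsm.map_add_one 0
  rw [zero_add] at h1
  linarith

end FlatSpots

theorem statement5_general (ht : ℝ → ℝ) (hsm : IsSemiMonotoneLift ht)
    (h : Circle1 → Circle1) (hlift : ∀ x, h (mk1 x) = mk1 (ht x))
    (l : ℕ) (a b : Fin l → ℝ)
    (hfs : ∀ i, IsFlatSpot ht (a i) (b i))
    (hall : ∀ a' b' : ℝ, IsFlatSpot ht a' b' → ∃ i, ∃ n : ℤ, a' = a i + n ∧ b' = b i + n)
    (D : ℝ → ℝ)
    (hD : ∀ x ∈ flatComplR a b, 1 < D x ∧ HasDerivWithinAt ht (D x) (flatComplR a b) x)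
    (α : ℝ) (hirr : Irrational α) (hrot : HasRotNum ht α)
    (Z : Set Circle1) (hZ : IsMinimalSet h Z) :
    (∀ i : Fin l,
      (¬(mk1 (a i) ∈ Z ∧ mk1 (b i) ∈ Z)) ↔
        ∃ n, 0 < n ∧ ∃ i' : Fin l,
          ∀ x ∈ Set.Icc (a i) (b i), h^[n] (mk1 x) ∈ mk1 '' Set.Icc (a i') (b i')) ∧
    ∃ i : Fin l, mk1 (a i) ∈ Z ∧ mk1 (b i) ∈ Z := by
  have hper := hsm.iterate_ne_self_of_irrational hlift hirr hrot
  have hiff : ∀ i : Fin l, ¬(mk1 (a i) ∈ Z ∧ mk1 (b i) ∈ Z) ↔ ∃ n, 0 < n ∧ ∃ i' : Fin l,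
      ∀ x ∈ Icc (a i) (b i), h^[n] (mk1 x) ∈ mk1 '' Icc (a i') (b i') := by
    refine fun i => ⟨fun hi => ?_, fun ⟨n, hn, i', hmaps⟩ ⟨ha, hb⟩ => ?_⟩
    · obtain ⟨n, hn, i', k, hk⟩ :=
        exists_iterate_mem_Icc_of_not_mem hsm hlift hper hZ hfs hall hD hi
      exact ⟨n, hn, i', ((hfs i).forall_iterate_mem_image_iff hsm hlift hn).2 ⟨k, hk⟩⟩
    · obtain ⟨k, hk⟩ := ((hfs i).forall_iterate_mem_image_iff hsm hlift hn).1 hmaps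
      exact (hfs i).iterate_notMem_Icc_of_mem hsm hlift hper hZ ha hb (hfs i') k hn hk
  refine ⟨hiff, ?_⟩
  by_contra! hloose
  have := hsm.nonempty_of_one_lt_deriv hD
  obtain ⟨i, n, hn, hmaps⟩ := exists_iterate_mapsTo_self (A := fun i => mk1 '' Icc (a i) (b i))
    fun i => by
      obtain ⟨n, hn, i', hmaps⟩ := (hiff i).1 fun hi => hloose i hi.1 hi.2
      exact ⟨n, hn, i', mapsTo_image_iff.2 fun x hx => hmaps x hx⟩
  exact (hfs i).not_mapsTo_iterate hsm hlift hper hn hmaps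

/-- With irrational rotation number and unique minimal set Z,
a flat spot is loose (some endpoint is outside Z) iff some forward image of it is
contained in another flat spot; in particular at least one flat spot is tight. -/
theorem statement5 (ht : ℝ → ℝ) (hsm : IsSemiMonotoneLift ht)
    (h : Circle1 → Circle1) (hlift : ∀ x, h (mk1 x) = mk1 (ht x))
    (l : ℕ) (a b : Fin l → ℝ)
    (hfs : ∀ i, IsFlatSpot ht (a i) (b i))
    (hrep : ∀ i, a i ∈ Set.Ico (0 : ℝ) 1)
    (hdist : Function.Injective a)
    (hall : ∀ a' b' : ℝ, IsFlatSpot ht a' b' → ∃ i, ∃ n : ℤ, a' = a i + n ∧ b' = b i + n)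
    (D : ℝ → ℝ) (hDcont : ContinuousOn D (flatComplR a b))
    (hD : ∀ x ∈ flatComplR a b, 1 < D x ∧ HasDerivWithinAt ht (D x) (flatComplR a b) x)
    (α : ℝ) (hirr : Irrational α) (hrot : HasRotNum ht α)
    (Z : Set Circle1) (hZ : IsMinimalSet h Z) (hZu : ∀ Z', IsMinimalSet h Z' → Z' = Z) :
    (∀ i : Fin l,
      (¬(mk1 (a i) ∈ Z ∧ mk1 (b i) ∈ Z)) ↔
        ∃ n, 0 < n ∧ ∃ i' : Fin l,
          ∀ x ∈ Set.Icc (a i) (b i), h^[n] (mk1 x) ∈ mk1 '' Set.Icc (a i') (b i')) ∧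
    ∃ i : Fin l, mk1 (a i) ∈ Z ∧ mk1 (b i) ∈ Z :=
  statement5_general ht hsm h hlift l a b hfs hall D hD α hirr hrot Z hZ
end

section
/- Let h̃ be a semi-monotone degree-one lift descending to h : S¹ → S¹, suppose h has exactly ℓ flat spots J₁,…,J_ℓ, and on P(h) = S¹ minus the interiors of the flat spots h is C¹ with one-sided derivatives > 1. Then for every x ∈ S¹ whose entire forward orbit lies in P(h), there exists n ≥ 0 such that hⁿ(x) is a recurrent point of h. -/
open Set Filter Topology MeasureTheory Function
open scoped ENNReal Classical

/-!
Lift `x` to `x₀ : ℝ`. On `P = flatComplR a b` the lift expands: for points of `P` closer than the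
shortest flat spot, the segment between them lies in `P` and the mean value theorem applies.
Hence two orbits in `P` whose difference tends to `0` eventually coincide.

If `ht` has a periodic point mod 1, `G = ht^[q] - p` is monotone and fixes a `ℤ`-periodic family
of points, so the `G`-orbit of `x₀` converges to a fixed point `w`. The `ht`-orbits of `x₀` and `w`
are then asymptotic, so they meet, and from that time on the orbit of `x` is periodic.

Otherwise suppose no iterate of `x` lies in its ω-limit set, and let `K ⊆ P` be the lift of
that set. Then `ht^[n] x₀` lies in a gap `(αₙ, βₙ)` of `K`, with `αₙ = ht^[n] α₀` and
`βₙ = ht^[n] β₀` because `ht '' K = K`. These gaps are pairwise disjoint mod `ℤ` (an overlap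
would produce a periodic point), so only finitely many are longer than any `c > 0`. Short gaps
have both endpoints in `P` and therefore grow, which is a contradiction.
-/

section OmegaLimit

open scoped omegaLimit

variable {X : Type*} [TopologicalSpace X] {f : X → X} {x y : X}

theorem mapClusterPt_iterate_iterate_iff (n : ℕ) :
    MapClusterPt y atTop (fun m => f^[m] (f^[n] x)) ↔ MapClusterPt y atTop (fun m => f^[m] x) := by
  have : (fun m => f^[m] (f^[n] x)) = (fun m => f^[m] x) ∘ (· + n) :=
    funext fun m => (iterate_add_apply f m n x).symm
  rw [this, mapClusterPt_comp, map_add_atTop_eq_nat]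

theorem mapsTo_omegaLimit_iterate (hf : Continuous f) :
    MapsTo f (ω⁺ (fun n z => f^[n] z) {x}) (ω⁺ (fun n z => f^[n] z) {x}) := fun y hy => by
  rw [mem_omegaLimit_singleton_iff_mapClusterPt] at hy ⊢
  rw [← mapClusterPt_iterate_iterate_iff 1]
  simpa only [iterate_one, Commute.iterate_self f _ x, comp_def] using
    hy.continuousAt_comp hf.continuousAt

theorem omegaLimit_iterate_subset_image [CompactSpace X] [T2Space X] [FirstCountableTopology X]
    (hf : Continuous f) : ω⁺ (fun n z => f^[n] z) {x} ⊆ f '' ω⁺ (fun n z => f^[n] z) {x} := by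
  intro y hy
  rw [mem_omegaLimit_singleton_iff_mapClusterPt, ← mapClusterPt_iterate_iterate_iff 1] at hy
  obtain ⟨ψ, hψ, hψy⟩ := hy.tendsto_subseq
  obtain ⟨z, φ, hφ, hφz⟩ := CompactSpace.tendsto_subseq fun i => f^[ψ i] x
  refine ⟨z, (mem_omegaLimit_singleton_iff_mapClusterPt _ _ _ _).2 <|
    .of_comp (hψ.comp hφ).tendsto_atTop hφz.mapClusterPt, tendsto_nhds_unique ?_
    (hψy.comp hφ.tendsto_atTop)⟩
  simpa only [comp_def, iterate_one, Commute.iterate_self f _ x] using (hf.tendsto z).comp hφz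

theorem IsRecurrentPt.of_iterate_mem_omegaLimit [FirstCountableTopology X] {n : ℕ}
    (h : f^[n] x ∈ ω⁺ (fun m z => f^[m] z) {x}) : IsRecurrentPt f (f^[n] x) := by
  rw [mem_omegaLimit_singleton_iff_mapClusterPt, ← mapClusterPt_iterate_iterate_iff n] at h
  obtain ⟨ψ, hψ, hψx⟩ := h.tendsto_subseq
  exact ⟨ψ, hψ.tendsto_atTop, hψx⟩

theorem IsPeriodicPt.isRecurrentPt {q : ℕ} (hq : 0 < q) (hx : IsPeriodicPt f q x) :
    IsRecurrentPt f x :=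
  ⟨(· * q), tendsto_id.atTop_mul_const' hq, by
    simpa only [(hx.const_mul _).eq] using tendsto_const_nhds⟩

end OmegaLimit

theorem exists_isFixedPt_tendsto_iterate {α : Type*} [ConditionallyCompleteLinearOrder α]
    [TopologicalSpace α] [OrderTopology α] {G : α → α} (hcont : Continuous G) (hmono : Monotone G)
    {lo hi x : α} (hlo : IsFixedPt G lo) (hhi : IsFixedPt G hi) (hx : x ∈ Icc lo hi) :
    ∃ w, IsFixedPt G w ∧ Tendsto (fun n => G^[n] x) atTop (𝓝 w) := by
  have hbdd : ∀ n, G^[n] x ∈ Icc lo hi := fun n => by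
    simpa only [(hlo.iterate n).eq, (hhi.iterate n).eq] using (hmono.iterate n).mapsTo_Icc hx
  obtain ⟨w, hw⟩ : ∃ w, Tendsto (fun n => G^[n] x) atTop (𝓝 w) := by
    rcases le_total x (G x) with h | h
    · exact ⟨_, tendsto_atTop_ciSup (hmono.monotone_iterate_of_le_map h)
        ⟨hi, forall_mem_range.2 fun n => (hbdd n).2⟩⟩
    · exact ⟨_, tendsto_atTop_ciInf (hmono.antitone_iterate_of_map_le h)
        ⟨lo, forall_mem_range.2 fun n => (hbdd n).1⟩⟩
  exact ⟨w, isFixedPt_of_tendsto_iterate hw hcont.continuousAt, hw⟩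

theorem tendsto_of_forall_tendsto_add_mul {X : Type*} [TopologicalSpace X] {u : ℕ → X} {y : X}
    {q : ℕ} (hq : 0 < q) (h : ∀ i < q, Tendsto (fun n => u (i + n * q)) atTop (𝓝 y)) :
    Tendsto u atTop (𝓝 y) := by
  intro s hs
  obtain ⟨N, hN⟩ := eventually_atTop.1 <| (eventually_all_finset (Finset.range q)).2
    fun i hi => h i (Finset.mem_range.1 hi) hs
  refine mem_map.2 (mem_atTop_sets.2 ⟨N * q, fun j hj => ?_⟩)
  simpa only [mem_preimage, Nat.mod_add_div'] using
    hN (j / q) ((Nat.le_div_iff_mul_le hq).2 hj) (j % q) (Finset.mem_range.2 (Nat.mod_lt j hq))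

theorem Finite.exists_pos_forall_le {ι : Type*} [Finite ι] {f : ι → ℝ} (hf : ∀ i, 0 < f i) :
    ∃ δ > 0, ∀ i, δ ≤ f i := by
  cases isEmpty_or_nonempty ι with
  | inl _ => exact ⟨1, one_pos, isEmptyElim⟩
  | inr _ =>
    obtain ⟨i₀, hi₀⟩ := Finite.exists_min f
    exact ⟨f i₀, hf i₀, hi₀⟩

theorem IsGreatest.map_inter_Iic {α : Type*} [LinearOrder α] {f : α → α} {K : Set α}
    (hf : Monotone f) (hmaps : MapsTo f K K) (hsurj : K ⊆ f '' K) {x a : α} (hfx : f x ∉ K)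
    (ha : IsGreatest (K ∩ Iic x) a) : IsGreatest (K ∩ Iic (f x)) (f a) := by
  refine ⟨⟨hmaps ha.1.1, hf ha.1.2⟩, ?_⟩
  rintro y ⟨hyK, hyx⟩
  obtain ⟨w, hw, rfl⟩ := hsurj hyK
  rcases le_or_gt w x with hwx | hxw
  · exact hf (ha.2 ⟨hw, hwx⟩)
  · exact absurd (le_antisymm hyx (hf hxw.le) ▸ hyK) hfx

theorem IsLeast.map_inter_Ici {α : Type*} [LinearOrder α] {f : α → α} {K : Set α}
    (hf : Monotone f) (hmaps : MapsTo f K K) (hsurj : K ⊆ f '' K) {x b : α} (hfx : f x ∉ K)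
    (hb : IsLeast (K ∩ Ici x) b) : IsLeast (K ∩ Ici (f x)) (f b) :=
  IsGreatest.map_inter_Iic (α := αᵒᵈ) hf.dual hmaps hsurj hfx hb

theorem eq_of_mem_Ioo_of_mem_Ioo {α : Type*} [LinearOrder α] {K : Set α} {a b a' b' t : α}
    (ha : a ∈ K) (ha' : a' ∈ K) (hgap : ∀ u ∈ K, u ∉ Ioo a b) (hgap' : ∀ u ∈ K, u ∉ Ioo a' b')
    (ht : t ∈ Ioo a b) (ht' : t ∈ Ioo a' b') : a = a' := by
  rcases lt_trichotomy a a' with h | h | h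
  · exact absurd ⟨h, ht'.1.trans ht.2⟩ (hgap a' ha')
  · exact h
  · exact absurd ⟨h, ht.1.trans ht'.2⟩ (hgap' a ha)

theorem exists_isGreatest_isLeast_iterate {ht : ℝ → ℝ} (hmono : Monotone ht) {K : Set ℝ}
    (hK : IsClosed K) (hKne : K.Nonempty) (hKint : ∀ u ∈ K, ∀ m : ℤ, u + m ∈ K)
    (hmaps : MapsTo ht K K) (hsurj : K ⊆ ht '' K) {x₀ : ℝ} (horb : ∀ n, ht^[n] x₀ ∉ K) :
    ∃ a b : ℝ, ∀ n, IsGreatest (K ∩ Iic (ht^[n] x₀)) (ht^[n] a) ∧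
      IsLeast (K ∩ Ici (ht^[n] x₀)) (ht^[n] b) := by
  obtain ⟨k, hk⟩ := hKne
  have hbelow : (K ∩ Iic x₀).Nonempty :=
    ⟨k + ⌊x₀ - k⌋, hKint k hk _, mem_Iic.2 (by linarith [Int.floor_le (x₀ - k)])⟩
  have habove : (K ∩ Ici x₀).Nonempty :=
    ⟨k + ⌈x₀ - k⌉, hKint k hk _, mem_Ici.2 (by linarith [Int.le_ceil (x₀ - k)])⟩
  refine ⟨sSup (K ∩ Iic x₀), sInf (K ∩ Ici x₀), fun n => ?_⟩
  induction n with
  | zero =>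
    exact ⟨(hK.inter isClosed_Iic).isGreatest_csSup hbelow ⟨x₀, fun _ hu => hu.2⟩,
      (hK.inter isClosed_Ici).isLeast_csInf habove ⟨x₀, fun _ hu => hu.2⟩⟩
  | succ n ih =>
    have hfx : ht (ht^[n] x₀) ∉ K := by simpa only [iterate_succ_apply'] using horb (n + 1)
    simpa only [iterate_succ_apply'] using
      ⟨ih.1.map_inter_Iic hmono hmaps hsurj hfx, ih.2.map_inter_Ici hmono hmaps hsurj hfx⟩

theorem finite_setOf_le_sub_of_disjoint {α β : ℕ → ℝ}
    (hdisj : ∀ n m, n < m → ∀ p : ℤ, Disjoint (Ioo (α n + p) (β n + p)) (Ioo (α m) (β m)))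
    {c : ℝ} (hc : 0 < c) : {n | c ≤ β n - α n}.Finite := by
  by_contra hinf
  set mid : ℕ → ℝ := fun n => (α n + β n) / 2
  -- pigeonhole on the position of the midpoints modulo 1, in boxes of width `c / 2`
  obtain ⟨n, hn, m, hm, hnm, hbox⟩ := Set.Infinite.exists_lt_map_eq_of_mapsTo hinf
    (f := fun n => ⌊Int.fract (mid n) * (2 / c)⌋) (t := Icc 0 ⌊2 / c⌋)
    (fun n _ => ⟨Int.floor_nonneg.2 (by positivity),
      Int.floor_mono (mul_le_of_le_one_left (by positivity) (Int.fract_lt_one _).le)⟩)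
    (finite_Icc _ _)
  have hclose : |Int.fract (mid m) - Int.fract (mid n)| < c / 2 := by
    have := Int.abs_sub_lt_one_of_floor_eq_floor hbox.symm
    rw [← sub_mul, abs_mul, abs_of_pos (by positivity : 0 < 2 / c), ← lt_div_iff₀ (by positivity),
      one_div_div] at this
    exact this
  have hshift :
      mid m - (mid n + (⌊mid m⌋ - ⌊mid n⌋ : ℤ)) = Int.fract (mid m) - Int.fract (mid n) := by
    simp only [Int.fract]
    push_cast
    ring
  rw [← hshift, abs_lt] at hclose
  have hn' : c ≤ β n - α n := hn
  have hm' : c ≤ β m - α m := hm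
  refine Set.disjoint_left.1 (hdisj n m hnm (⌊mid m⌋ - ⌊mid n⌋))
    (show mid m ∈ _ from ⟨?_, ?_⟩) ⟨?_, ?_⟩ <;>
    simp only [mid] at hclose ⊢ <;> linarith

section Lift

variable {ht : ℝ → ℝ}

def IsSemiMonotoneLift.toCircleDeg1Lift_s6 (hsm : IsSemiMonotoneLift ht) : CircleDeg1Lift :=
  ⟨⟨ht, hsm.2.1⟩, hsm.2.2⟩

theorem IsSemiMonotoneLift.iterate_add_int (hsm : IsSemiMonotoneLift ht) (n : ℕ) (x : ℝ)
    (m : ℤ) : ht^[n] (x + m) = ht^[n] x + m :=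
  (hsm.toCircleDeg1Lift_s6.commute_add_int m).iterate_left n x

theorem IsSemiMonotoneLift.iterate_sub_int (hsm : IsSemiMonotoneLift ht) (n : ℕ) (x : ℝ)
    (m : ℤ) : ht^[n] (x - m) = ht^[n] x - m := by
  simpa only [Int.cast_neg, ← sub_eq_add_neg] using hsm.iterate_add_int n x (-m)

theorem IsSemiMonotoneLift.iterate_iterate_sub_int (hsm : IsSemiMonotoneLift ht) (q : ℕ) (p : ℤ)
    (y : ℝ) (n i : ℕ) :
    ht^[i] ((fun y => ht^[q] y - p)^[n] y) = ht^[i + n * q] y - (n * p : ℤ) := by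
  induction n generalizing y with
  | zero => simp
  | succ n ih =>
    rw [iterate_succ_apply, ih, hsm.iterate_sub_int, ← iterate_add_apply,
      show i + (n + 1) * q = i + n * q + q by ring]
    push_cast
    ring

theorem mk1_add_int (u : ℝ) (m : ℤ) : mk1 (u + m) = mk1 u := by
  simp [mk1]

theorem mk1_eq_mk1_iff_s6 {u v : ℝ} : mk1 u = mk1 v ↔ ∃ m : ℤ, v = u + m := by
  simp only [mk1, QuotientAddGroup.eq, AddSubgroup.mem_zmultiples_iff, zsmul_one]
  exact ⟨fun ⟨m, hm⟩ => ⟨m, by linarith⟩, fun ⟨m, hm⟩ => ⟨m, by linarith⟩⟩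

theorem mk1_surjective : Surjective mk1 := QuotientAddGroup.mk_surjective

theorem continuous_mk1 : Continuous mk1 := continuous_quotient_mk'

theorem semiconj_mk1 {h : Circle1 → Circle1} (hlift : ∀ x, h (mk1 x) = mk1 (ht x)) :
    Semiconj mk1 ht h := fun x => (hlift x).symm

theorem continuous_of_lift {h : Circle1 → Circle1} (hlift : ∀ x, h (mk1 x) = mk1 (ht x))
    (hcont : Continuous ht) : Continuous h :=
  (QuotientAddGroup.isQuotientMap_mk _).continuous_iff.2 <| by
    have : h ∘ mk1 = mk1 ∘ ht := funext hlift
    exact this ▸ continuous_mk1.comp hcont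

end Lift

section FlatSpots

variable {l : ℕ} {a b : Fin l → ℝ}

theorem isClosed_flatComplR : IsClosed (flatComplR a b) := by
  simp only [flatComplR, ofPred_forall]
  exact isClosed_iInter fun i => isClosed_iInter fun n => isOpen_Ioo.isClosed_compl

theorem add_int_mem_flatComplR {u : ℝ} (hu : u ∈ flatComplR a b) (m : ℤ) :
    u + m ∈ flatComplR a b := fun i n hin =>
  hu i (n - m) ⟨by push_cast; linarith [hin.1], by push_cast; linarith [hin.2]⟩

theorem mk1_mem_flatComplC_iff {u : ℝ} : mk1 u ∈ flatComplC a b ↔ u ∈ flatComplR a b := by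
  simp only [flatComplC, mem_compl_iff, mem_iUnion, mem_image, mk1_eq_mk1_iff_s6, not_exists,
    not_and, flatComplR, mem_ofPred_eq]
  constructor
  · intro hu i n hin
    exact hu i (u - n) ⟨by linarith [hin.1], by linarith [hin.2]⟩ n (by ring)
  · rintro hu i y hy m rfl
    exact hu i m ⟨by linarith [hy.1], by linarith [hy.2]⟩

theorem Icc_subset_flatComplR {δ : ℝ} (hδ : ∀ i, δ ≤ b i - a i) {u v : ℝ}
    (hu : u ∈ flatComplR a b) (hv : v ∈ flatComplR a b) (huv : v - u < δ) :
    Icc u v ⊆ flatComplR a b := by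
  intro w hw i n hwin
  have hleft : u ≤ a i + n := not_lt.1 fun h => hu i n ⟨h, hw.1.trans_lt hwin.2⟩
  have hright : b i + n ≤ v := not_lt.1 fun h => hv i n ⟨hwin.1.trans_le hw.2, h⟩
  linarith [hδ i]

theorem isClosed_flatComplC : IsClosed (flatComplC a b) :=
  isClosed_compl_iff.2 <| isOpen_iUnion fun _ => QuotientAddGroup.isOpenMap_coe _ isOpen_Ioo

end FlatSpots

def IsLocallyExpandingOn (ht : ℝ → ℝ) (P : Set ℝ) (δ : ℝ) : Prop :=
  ∀ u ∈ P, ∀ v ∈ P, u < v → v - u < δ → v - u < ht v - ht u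

theorem exists_isLocallyExpandingOn_flatComplR {l : ℕ} {a b : Fin l → ℝ} {ht D : ℝ → ℝ}
    (hcont : Continuous ht) (hab : ∀ i, a i < b i)
    (hD : ∀ x ∈ flatComplR a b, 1 < D x ∧ HasDerivWithinAt ht (D x) (flatComplR a b) x) :
    ∃ δ > 0, IsLocallyExpandingOn ht (flatComplR a b) δ := by
  obtain ⟨δ, hδ, hδab⟩ := Finite.exists_pos_forall_le fun i => sub_pos.2 (hab i)
  refine ⟨δ, hδ, fun u hu v hv huv hshort => ?_⟩
  have hsub := Icc_subset_flatComplR hδab hu hv hshort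
  have hderiv : ∀ c ∈ Ioo u v, HasDerivAt ht (D c) c := fun c hc =>
    (hD c (hsub (Ioo_subset_Icc_self hc))).2.hasDerivAt <|
      mem_of_superset (Ioo_mem_nhds hc.1 hc.2) (Ioo_subset_Icc_self.trans hsub)
  obtain ⟨c, hc, hslope⟩ := exists_hasDerivAt_eq_slope ht D huv hcont.continuousOn hderiv
  have h1 := (hD c (hsub (Ioo_subset_Icc_self hc))).1
  rw [hslope, one_lt_div (sub_pos.2 huv)] at h1
  exact h1

section Expanding

variable {ht : ℝ → ℝ} {P : Set ℝ} {δ : ℝ}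

theorem IsLocallyExpandingOn.abs_sub_lt (hexp : IsLocallyExpandingOn ht P δ) (hmono : Monotone ht)
    {u v : ℝ} (hu : u ∈ P) (hv : v ∈ P) (hne : u ≠ v) (hclose : |u - v| < δ) :
    |u - v| < |ht u - ht v| := by
  wlog huv : u < v generalizing u v
  · rw [abs_sub_comm, abs_sub_comm (ht u)]
    exact this hv hu hne.symm (by rwa [abs_sub_comm]) (hne.lt_or_gt.resolve_left huv)
  rw [abs_sub_comm] at hclose ⊢
  rw [abs_sub_comm (ht u), abs_of_pos (sub_pos.2 huv), abs_of_nonneg (sub_nonneg.2 (hmono huv.le))]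
  rw [abs_of_pos (sub_pos.2 huv)] at hclose
  exact hexp u hu v hv huv hclose

theorem IsLocallyExpandingOn.exists_iterate_eq (hexp : IsLocallyExpandingOn ht P δ) (hδ : 0 < δ)
    (hmono : Monotone ht) {u v : ℝ} (hu : ∀ j, ht^[j] u ∈ P) (hv : ∀ j, ht^[j] v ∈ P)
    (hlim : Tendsto (fun j => ht^[j] u - ht^[j] v) atTop (𝓝 0)) : ∃ j, ht^[j] u = ht^[j] v := by
  by_contra! hne
  set e : ℕ → ℝ := fun j => |ht^[j] u - ht^[j] v|
  have he : Tendsto e atTop (𝓝 0) := by simpa only [abs_zero] using hlim.abs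
  obtain ⟨N, hN⟩ := eventually_atTop.1 (he.eventually_lt_const hδ)
  have hgrow : ∀ n ≥ N, e N ≤ e n := by
    refine Nat.le_induction le_rfl fun n hn ih => ih.trans (le_of_lt ?_)
    simpa only [e, iterate_succ_apply'] using hexp.abs_sub_lt hmono (hu n) (hv n) (hne n) (hN n hn)
  have hpos : 0 < e N := abs_pos.2 (sub_ne_zero.2 (hne N))
  exact hpos.not_ge (ge_of_tendsto he (eventually_atTop.2 ⟨N, hgrow⟩))

theorem IsLocallyExpandingOn.exists_periodic_iterate_of_periodic (hsm : IsSemiMonotoneLift ht)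
    (hexp : IsLocallyExpandingOn ht P δ) (hδ : 0 < δ) (hP : IsClosed P)
    (hPint : ∀ u ∈ P, ∀ m : ℤ, u + m ∈ P) {x₀ : ℝ} (horb : ∀ n, ht^[n] x₀ ∈ P) {q : ℕ}
    (hq : 0 < q) {p : ℤ} {z : ℝ} (hz : ht^[q] z = z + p) :
    ∃ j, ht^[q] (ht^[j] x₀) = ht^[j] x₀ + p := by
  set G : ℝ → ℝ := fun y => ht^[q] y - p
  have hGiter : ∀ y n i, ht^[i] (G^[n] y) = ht^[i + n * q] y - (n * p : ℤ) :=
    hsm.iterate_iterate_sub_int q p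
  have hGcont : Continuous G := (hsm.1.iterate q).sub continuous_const
  have hGmono : Monotone G := fun u v huv => sub_le_sub_right (hsm.2.1.iterate q huv) _
  have hfix : ∀ m : ℤ, IsFixedPt G (z + m) := fun m => by
    simp only [IsFixedPt, G, hsm.iterate_add_int, hz]
    ring
  obtain ⟨w, hw, hlim⟩ := exists_isFixedPt_tendsto_iterate (x := x₀) hGcont hGmono
    (hfix ⌊x₀ - z⌋) (hfix ⌈x₀ - z⌉)
    ⟨by linarith [Int.floor_le (x₀ - z)], by linarith [Int.le_ceil (x₀ - z)]⟩
  -- along `j = i + n * q` both orbits are shifted by the same integer `n * p`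
  have hsub : ∀ i n, ht^[i + n * q] x₀ - ht^[i + n * q] w = ht^[i] (G^[n] x₀) - ht^[i] w := by
    intro i n
    have h₁ := hGiter x₀ n i
    have h₂ := hGiter w n i
    rw [(hw.iterate n).eq] at h₂
    linarith
  have hcomp : ∀ i, Tendsto (fun n => ht^[i] (G^[n] x₀)) atTop (𝓝 (ht^[i] w)) := fun i =>
    ((hsm.1.iterate i).tendsto w).comp hlim
  have hworb : ∀ i, ht^[i] w ∈ P := fun i =>
    hP.mem_of_tendsto (hcomp i) <| Eventually.of_forall fun n => by
      simpa only [hGiter, Int.cast_neg, ← sub_eq_add_neg] using hPint _ (horb _) (-(n * p))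
  obtain ⟨j, hj⟩ := hexp.exists_iterate_eq hδ hsm.2.1 horb hworb <|
    tendsto_of_forall_tendsto_add_mul hq fun i _ => by
      simpa only [hsub, sub_self] using (hcomp i).sub_const (ht^[i] w)
  have hwq : ht^[q] w = w + p := by
    have := hw.eq
    simp only [G] at this
    linarith
  refine ⟨j, ?_⟩
  rw [hj, ← iterate_add_apply, add_comm, iterate_add_apply, hwq, hsm.iterate_add_int]

theorem IsLocallyExpandingOn.exists_periodic_of_forall_iterate_not_mem
    (hexp : IsLocallyExpandingOn ht P δ) (hδ : 0 < δ) (hmono : Monotone ht) {K : Set ℝ}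
    (hK : IsClosed K) (hKne : K.Nonempty) (hKint : ∀ u ∈ K, ∀ m : ℤ, u + m ∈ K)
    (hmaps : MapsTo ht K K) (hsurj : K ⊆ ht '' K) (hKP : K ⊆ P) {x₀ : ℝ}
    (horb : ∀ n, ht^[n] x₀ ∉ K) : ∃ q > 0, ∃ (p : ℤ) (z : ℝ), ht^[q] z = z + p := by
  by_contra! haper
  obtain ⟨a, b, hab⟩ := exists_isGreatest_isLeast_iterate hmono hK hKne hKint hmaps hsurj horb
  have hgap : ∀ n, ∀ u ∈ K, u ∉ Ioo (ht^[n] a) (ht^[n] b) := fun n u hu ⟨hau, hub⟩ =>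
    (le_total u (ht^[n] x₀)).elim (fun h => (hab n).1.2 ⟨hu, h⟩ |>.not_gt hau)
      (fun h => (hab n).2.2 ⟨hu, h⟩ |>.not_gt hub)
  have hlt : ∀ n, ht^[n] a < ht^[n] b := fun n =>
    ((hab n).1.1.2.lt_of_ne fun h : ht^[n] a = _ => horb n (h ▸ (hab n).1.1.1)).trans_le
      (hab n).2.1.2
  -- two gaps along the orbit that overlap modulo `ℤ` would give a periodic point
  have hdisj : ∀ n m, n < m → ∀ p : ℤ,
      Disjoint (Ioo (ht^[n] a + p) (ht^[n] b + p)) (Ioo (ht^[m] a) (ht^[m] b)) := by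
    refine fun n m hnm p => Set.disjoint_left.2 fun t htn htm => haper (m - n) (by omega) p
      (ht^[n] a) ?_
    rw [← iterate_add_apply, Nat.sub_add_cancel hnm.le]
    refine (eq_of_mem_Ioo_of_mem_Ioo (hKint _ (hab n).1.1.1 p) (hab m).1.1.1 (fun u hu hu' => ?_)
      (hgap m) htn htm).symm
    refine hgap n (u + (-p : ℤ)) (hKint u hu _) ⟨?_, ?_⟩ <;> push_cast <;> linarith [hu'.1, hu'.2]
  obtain ⟨N, hN⟩ : ∃ N, ∀ n ≥ N, ht^[n] b - ht^[n] a < δ := by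
    obtain ⟨N, hN⟩ := (finite_setOf_le_sub_of_disjoint hdisj hδ).bddAbove
    exact ⟨N + 1, fun n hn => not_le.1 fun h => by have := hN h; omega⟩
  have hgrow : ∀ n ≥ N, ht^[N] b - ht^[N] a ≤ ht^[n] b - ht^[n] a := by
    refine Nat.le_induction le_rfl fun n hn ih => ih.trans (le_of_lt ?_)
    simpa only [iterate_succ_apply'] using
      hexp _ (hKP (hab n).1.1.1) _ (hKP (hab n).2.1.1) (hlt n) (hN n hn)
  exact (finite_setOf_le_sub_of_disjoint hdisj (sub_pos.2 (hlt N))).not_infinite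
    ((Set.Ici_infinite N).mono hgrow)

open scoped omegaLimit in
theorem IsLocallyExpandingOn.exists_iterate_mem_omegaLimit (hsm : IsSemiMonotoneLift ht)
    {h : Circle1 → Circle1} (hlift : ∀ x, h (mk1 x) = mk1 (ht x))
    (hexp : IsLocallyExpandingOn ht P δ) (hδ : 0 < δ) {x₀ : ℝ}
    (hP : mk1 ⁻¹' ω⁺ (fun n y => h^[n] y) {mk1 x₀} ⊆ P)
    (haper : ¬ ∃ q > 0, ∃ (p : ℤ) (z : ℝ), ht^[q] z = z + p) :
    ∃ n, h^[n] (mk1 x₀) ∈ ω⁺ (fun n y => h^[n] y) {mk1 x₀} := by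
  by_contra! hout
  have hcont := continuous_of_lift hlift hsm.1
  refine haper <| hexp.exists_periodic_of_forall_iterate_not_mem hδ hsm.2.1
    ((isClosed_omegaLimit _ _ _).preimage continuous_mk1) ?_ (fun u hu m => ?_) (fun u hu => ?_)
    (fun v hv => ?_) hP fun n hn => hout n ((semiconj_mk1 hlift).iterate_right n x₀ ▸ hn)
  · obtain ⟨y, hy⟩ := nonempty_omegaLimit atTop (fun n y => h^[n] y) _ (singleton_nonempty _)
    obtain ⟨v, rfl⟩ := mk1_surjective y
    exact ⟨v, hy⟩
  · simpa only [mem_preimage, mk1_add_int] using hu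
  · simpa only [mem_preimage, ← hlift] using mapsTo_omegaLimit_iterate hcont hu
  · obtain ⟨y, hy, hyv⟩ := omegaLimit_iterate_subset_image hcont hv
    obtain ⟨u, rfl⟩ := mk1_surjective y
    obtain ⟨m, rfl⟩ := mk1_eq_mk1_iff_s6.1 ((hlift u).symm.trans hyv)
    exact ⟨u + m, by simpa only [mem_preimage, mk1_add_int] using hy,
      hsm.toCircleDeg1Lift_s6.map_add_int u m⟩

end Expanding

theorem statement6_general (ht : ℝ → ℝ) (hsm : IsSemiMonotoneLift ht)
    (h : Circle1 → Circle1) (hlift : ∀ x, h (mk1 x) = mk1 (ht x))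
    (l : ℕ) (a b : Fin l → ℝ)
    (hfs : ∀ i, IsFlatSpot ht (a i) (b i))
    (D : ℝ → ℝ)
    (hD : ∀ x ∈ flatComplR a b, 1 < D x ∧ HasDerivWithinAt ht (D x) (flatComplR a b) x) :
    ∀ x : Circle1, (∀ n : ℕ, h^[n] x ∈ flatComplC a b) →
      ∃ n : ℕ, IsRecurrentPt h (h^[n] x) := by
  intro x hx
  obtain ⟨x₀, rfl⟩ := mk1_surjective x
  have hiter := (semiconj_mk1 hlift).iterate_right
  have horb : ∀ n, ht^[n] x₀ ∈ flatComplR a b := fun n =>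
    mk1_mem_flatComplC_iff.1 ((hiter n x₀).symm ▸ hx n)
  obtain ⟨δ, hδ, hexp⟩ := exists_isLocallyExpandingOn_flatComplR hsm.1 (fun i => (hfs i).1) hD
  by_cases hper : ∃ q > 0, ∃ (p : ℤ) (z : ℝ), ht^[q] z = z + p
  · obtain ⟨q, hq, p, z, hz⟩ := hper
    obtain ⟨j, hj⟩ := hexp.exists_periodic_iterate_of_periodic hsm hδ isClosed_flatComplR
      (fun u hu m => add_int_mem_flatComplR hu m) horb hq hz
    refine ⟨j, IsPeriodicPt.isRecurrentPt hq ?_⟩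
    rw [IsPeriodicPt, IsFixedPt, ← hiter, ← hiter, hj, mk1_add_int]
  · obtain ⟨n, hn⟩ := hexp.exists_iterate_mem_omegaLimit hsm hlift hδ (fun u hu =>
      mk1_mem_flatComplC_iff.1 <| isClosed_flatComplC.mem_of_mapClusterPt
        ((mem_omegaLimit_singleton_iff_mapClusterPt _ _ _ _).1 hu) (Eventually.of_forall hx)) hper
    exact ⟨n, .of_iterate_mem_omegaLimit hn⟩

/-- For a semi-monotone circle map with finitely many flat spots
which is expanding on the positive-slope region P(h), every point whose entire
forward orbit lies in P(h) eventually lands on a recurrent point. -/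
theorem statement6 (ht : ℝ → ℝ) (hsm : IsSemiMonotoneLift ht)
    (h : Circle1 → Circle1) (hlift : ∀ x, h (mk1 x) = mk1 (ht x))
    (l : ℕ) (a b : Fin l → ℝ)
    (hfs : ∀ i, IsFlatSpot ht (a i) (b i))
    (hrep : ∀ i, a i ∈ Set.Ico (0 : ℝ) 1)
    (hdist : Function.Injective a)
    (hall : ∀ a' b' : ℝ, IsFlatSpot ht a' b' → ∃ i, ∃ n : ℤ, a' = a i + n ∧ b' = b i + n)
    (D : ℝ → ℝ) (hDcont : ContinuousOn D (flatComplR a b))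
    (hD : ∀ x ∈ flatComplR a b, 1 < D x ∧ HasDerivWithinAt ht (D x) (flatComplR a b) x) :
    ∀ x : Circle1, (∀ n : ℕ, h^[n] x ∈ flatComplC a b) →
      ∃ n : ℕ, IsRecurrentPt h (h^[n] x) :=
  statement6_general ht hsm h hlift l a b hfs D hD
end
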